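/- arXiv:1402.3949 — 2 statements merged into one kernel-verified Lean document; each statement's English description precedes it below -/
import Mathlib

section
/- The iterated generating function of the 2-type branching process satisfies, for all $n \geq 1$ and $s_1, s_2 \in [0,1)$: if $f_1(s_1,s_2) = \frac{1}{1+(1-s_1)\rho_1 + (1-s_2)\rho_2}$ and $f_n(s_1,s_2) = f_{n-1}(g^{(1)}(s_1,s_2), g^{(2)}(s_1,s_2))$ with $g^{(1)}(s_1,s_2) = \frac{q}{1-p_1 s_1 - p_2 s_2}$ and $g^{(2)}(s_1,s_2) = \frac{q s_1}{1-p_1 s_1 - p_2 s_2}$, then $f_n(s_1,s_2) = \frac{1+(1-s_1)a_{n-1}+(1-s_2)b_{n-1}}{1+(1-s_1)a_n+(1-s_2)b_n}$, where $(a_n,b_n) = (\rho_1,\rho_2)(M^{n-1}+\cdots+M+I)$, $(a_0,b_0)=(0,0)$, $\rho_i = p_i/q$, and $M = \begin{pmatrix} \rho_1 & \rho_2 \\ 1+\rho_1 & \rho_2 \end{pmatrix}$. -/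
/-!
With `D x (s₁, s₂) = 1 + (1 - s₁) x₀ + (1 - s₂) x₁` the claim reads `fₙ = D aₙ₋₁ / D aₙ`.
Composing `D x` with `(g⁽¹⁾, g⁽²⁾)` gives `q · D (ρ + x M) / (1 - p₁ s₁ - p₂ s₂)`, and
`ρ + aₙ M = aₙ₊₁`. So in `fₙ ∘ g` the common factor cancels and the indices shift by one,
which is the induction step; `g` maps `[0,1)²` into itself, so the induction stays in the domain.
-/

open Finset Matrix

def lfDenom (x : Fin 2 → ℝ) (s1 s2 : ℝ) : ℝ := 1 + (1 - s1) * x 0 + (1 - s2) * x 1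

theorem Matrix.vecMul_sum_range_pow_succ {m R : Type*} [Fintype m] [DecidableEq m] [Semiring R]
    (v : m → R) (M : Matrix m m R) (n : ℕ) :
    v ᵥ* ∑ i ∈ range (n + 1), M ^ i = v + (v ᵥ* ∑ i ∈ range n, M ^ i) ᵥ* M := by
  rw [sum_range_succ', pow_zero, vecMul_add, vecMul_one, vecMul_vecMul, sum_mul, add_comm]
  simp only [pow_succ]

section

variable {p1 p2 q : ℝ}

theorem lfDenom_comp (hq : q ≠ 0) (hsum : p1 + p2 + q = 1) (x : Fin 2 → ℝ) {s1 s2 : ℝ}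
    (hc : 1 - p1 * s1 - p2 * s2 ≠ 0) :
    lfDenom x (q / (1 - p1 * s1 - p2 * s2)) (q * s1 / (1 - p1 * s1 - p2 * s2)) =
      q * lfDenom (![p1 / q, p2 / q] + x ᵥ* !![p1 / q, p2 / q; 1 + p1 / q, p2 / q]) s1 s2
        / (1 - p1 * s1 - p2 * s2) := by
  simp only [lfDenom, vecMul, dotProduct, Fin.sum_univ_two, Pi.add_apply, of_apply, cons_val',
    cons_val_zero, cons_val_one, cons_val_fin_one]
  field_simp
  linear_combination -(x 0 + x 1 + 1) * hsum

theorem lfDenom_comp_div_lfDenom_comp (hq : q ≠ 0) (hsum : p1 + p2 + q = 1) (x y : Fin 2 → ℝ)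
    {s1 s2 : ℝ} (hc : 1 - p1 * s1 - p2 * s2 ≠ 0) :
    lfDenom x (q / (1 - p1 * s1 - p2 * s2)) (q * s1 / (1 - p1 * s1 - p2 * s2)) /
        lfDenom y (q / (1 - p1 * s1 - p2 * s2)) (q * s1 / (1 - p1 * s1 - p2 * s2)) =
      lfDenom (![p1 / q, p2 / q] + x ᵥ* !![p1 / q, p2 / q; 1 + p1 / q, p2 / q]) s1 s2 /
        lfDenom (![p1 / q, p2 / q] + y ᵥ* !![p1 / q, p2 / q; 1 + p1 / q, p2 / q]) s1 s2 := by
  rw [lfDenom_comp hq hsum x hc, lfDenom_comp hq hsum y hc, div_div_div_cancel_right₀ hc,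
    mul_div_mul_left _ _ hq]

theorem q_lt_one_sub (hp1 : 0 < p1) (hp2 : 0 ≤ p2) (hsum : p1 + p2 + q = 1) {s1 s2 : ℝ}
    (hs1 : s1 < 1) (hs2 : s2 ≤ 1) : q < 1 - p1 * s1 - p2 * s2 := by
  nlinarith

theorem generatingMap_mem_Ico (hp1 : 0 < p1) (hp2 : 0 ≤ p2) (hq : 0 < q)
    (hsum : p1 + p2 + q = 1) {s1 s2 : ℝ} (hs1 : s1 ∈ Set.Ico 0 1) (hs2 : s2 ∈ Set.Ico 0 1) :
    q / (1 - p1 * s1 - p2 * s2) ∈ Set.Ico 0 1 ∧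
      q * s1 / (1 - p1 * s1 - p2 * s2) ∈ Set.Ico 0 1 := by
  have hc := q_lt_one_sub hp1 hp2 hsum hs1.2 hs2.2.le
  have hqs1 : q * s1 < 1 - p1 * s1 - p2 * s2 := (mul_lt_of_lt_one_right hq hs1.2).trans hc
  have hpos : 0 < 1 - p1 * s1 - p2 * s2 := hq.trans hc
  exact ⟨⟨div_nonneg hq.le hpos.le, (div_lt_one hpos).2 hc⟩,
    ⟨div_nonneg (mul_nonneg hq.le hs1.1) hpos.le, (div_lt_one hpos).2 hqs1⟩⟩

end

theorem stmt7_general (p1 p2 q : ℝ) (hp1 : 0 < p1) (hp2 : 0 < p2)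
    (hq : 0 < q) (hsum : p1 + p2 + q = 1)
    (ρ1 ρ2 : ℝ) (hρ1 : ρ1 = p1 / q) (hρ2 : ρ2 = p2 / q)
    (M : Matrix (Fin 2) (Fin 2) ℝ) (hM : M = !![ρ1, ρ2; 1 + ρ1, ρ2])
    (ab : ℕ → Fin 2 → ℝ)
    (hab : ∀ n : ℕ, ab n = Matrix.vecMul ![ρ1, ρ2] (∑ i ∈ Finset.range n, M ^ i))
    (g1 g2 : ℝ → ℝ → ℝ)
    (hg1 : ∀ s1 s2, g1 s1 s2 = q / (1 - p1 * s1 - p2 * s2))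
    (hg2 : ∀ s1 s2, g2 s1 s2 = q * s1 / (1 - p1 * s1 - p2 * s2))
    (f : ℕ → ℝ → ℝ → ℝ)
    (hf1 : ∀ s1 s2, f 1 s1 s2 = 1 / (1 + (1 - s1) * ρ1 + (1 - s2) * ρ2))
    (hfrec : ∀ n : ℕ, 1 ≤ n → ∀ s1 s2, f (n + 1) s1 s2 = f n (g1 s1 s2) (g2 s1 s2)) :
    ∀ n : ℕ, 1 ≤ n → ∀ s1 ∈ Set.Ico (0:ℝ) 1, ∀ s2 ∈ Set.Ico (0:ℝ) 1,
      f n s1 s2 = (1 + (1 - s1) * ab (n - 1) 0 + (1 - s2) * ab (n - 1) 1)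
        / (1 + (1 - s1) * ab n 0 + (1 - s2) * ab n 1) := by
  subst hρ1 hρ2 hM
  have hab_succ (n : ℕ) :
      ab (n + 1) = ![p1 / q, p2 / q] + ab n ᵥ* !![p1 / q, p2 / q; 1 + p1 / q, p2 / q] := by
    rw [hab, hab, vecMul_sum_range_pow_succ]
  intro n hn
  induction n, hn using Nat.le_induction with
  | base =>
    intro s1 _ s2 _
    simp [hf1, hab]
  | succ n hn ih =>
    intro s1 hs1 s2 hs2
    obtain ⟨hg1_mem, hg2_mem⟩ := generatingMap_mem_Ico hp1 hp2.le hq hsum hs1 hs2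
    have hc := (q_lt_one_sub hp1 hp2.le hsum hs1.2 hs2.2.le).trans' hq
    rw [hfrec _ hn, ih _ (hg1 s1 s2 ▸ hg1_mem) _ (hg2 s1 s2 ▸ hg2_mem), hg1, hg2]
    change lfDenom _ _ _ / lfDenom _ _ _ = lfDenom _ _ _ / lfDenom _ _ _
    rw [lfDenom_comp_div_lfDenom_comp hq.ne' hsum _ _ hc.ne', ← hab_succ, ← hab_succ,
      Nat.sub_add_cancel hn, Nat.add_sub_cancel]

theorem stmt7 (p1 p2 q : ℝ) (hp1 : 0 < p1) (hp1' : p1 < 1) (hp2 : 0 < p2) (hp2' : p2 < 1)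
    (hq : 0 < q) (hq' : q < 1) (hsum : p1 + p2 + q = 1)
    (ρ1 ρ2 : ℝ) (hρ1 : ρ1 = p1 / q) (hρ2 : ρ2 = p2 / q)
    (M : Matrix (Fin 2) (Fin 2) ℝ) (hM : M = !![ρ1, ρ2; 1 + ρ1, ρ2])
    (ab : ℕ → Fin 2 → ℝ)
    (hab : ∀ n : ℕ, ab n = Matrix.vecMul ![ρ1, ρ2] (∑ i ∈ Finset.range n, M ^ i))
    (g1 g2 : ℝ → ℝ → ℝ)
    (hg1 : ∀ s1 s2, g1 s1 s2 = q / (1 - p1 * s1 - p2 * s2))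
    (hg2 : ∀ s1 s2, g2 s1 s2 = q * s1 / (1 - p1 * s1 - p2 * s2))
    (f : ℕ → ℝ → ℝ → ℝ)
    (hf1 : ∀ s1 s2, f 1 s1 s2 = 1 / (1 + (1 - s1) * ρ1 + (1 - s2) * ρ2))
    (hfrec : ∀ n : ℕ, 1 ≤ n → ∀ s1 s2, f (n + 1) s1 s2 = f n (g1 s1 s2) (g2 s1 s2)) :
    ∀ n : ℕ, 1 ≤ n → ∀ s1 ∈ Set.Ico (0:ℝ) 1, ∀ s2 ∈ Set.Ico (0:ℝ) 1,
      f n s1 s2 = (1 + (1 - s1) * ab (n - 1) 0 + (1 - s2) * ab (n - 1) 1)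
        / (1 + (1 - s1) * ab n 0 + (1 - s2) * ab n 1) :=
  stmt7_general p1 p2 q hp1 hp2 hq hsum ρ1 ρ2 hρ1 hρ2 M hM ab hab g1 g2 hg1 hg2 f hf1 hfrec
end

section
/- Let $u = (\rho_1, \rho_2)$ with $\rho_i = p_i/q$ and let $v_N = (1 - e^{-2\lambda/N}, 1 - e^{-\lambda/N})^{\prime}$ for $\lambda > 0$. Under the symmetric condition, $N \cdot u M^{[Nx]-1} v_N \to \frac{2\lambda}{\sigma^2}$ as $N \to \infty$, for any fixed $x \in (0,1]$, where $\sigma^2 = 6q - 2$ and $M$ is the mean matrix with eigenvalues $1$ and $\alpha = (1-2q)/q$, $|\alpha| < 1$. -/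
/-!
Under the symmetric condition `p₁ = 2 - 3q`, `p₂ = 2q - 1`, the mean matrix `M` fixes the row
vector `a = (1 - q, 2q - 1) / (3q - 1)`, and `u - a` is a left eigenvector of `M` for the second
eigenvalue `α = -ρ₂`, where `|α| < 1`. Hence `u Mⁿ = a + αⁿ (u - a) → a`, while `N v_N → (2λ, λ)`,
so the limit is `a ⬝ (2λ, λ) = λ / (3q - 1) = 2λ / σ²`.
-/

open Filter Real Matrix Topology

theorem tendsto_natCast_mul_one_sub_exp_neg_div (c : ℝ) :
    Tendsto (fun N : ℕ => (N : ℝ) * (1 - exp (-c / N))) atTop (𝓝 c) := by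
  have hderiv : HasDerivAt (fun t => 1 - exp (-c * t)) c 0 := by
    simpa using ((hasDerivAt_id (0 : ℝ)).const_mul (-c)).exp.const_sub 1
  have hinv : Tendsto (fun N : ℕ => (N : ℝ)⁻¹) atTop (𝓝[≠] 0) :=
    (tendsto_inv_atTop_nhdsGT_zero.mono_right (nhdsGT_le_nhdsNE 0)).comp
      tendsto_natCast_atTop_atTop
  refine (hderiv.tendsto_slope_zero.comp hinv).congr fun N => ?_
  simp [div_eq_mul_inv]

theorem vecMul_pow_eq_add_pow_smul {R ι : Type*} [CommRing R] [Fintype ι] [DecidableEq ι]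
    {M : Matrix ι ι R} {u a : ι → R} {α : R} (ha : a ᵥ* M = a)
    (hb : (u - a) ᵥ* M = α • (u - a)) (n : ℕ) :
    u ᵥ* M ^ n = a + α ^ n • (u - a) := by
  induction n with
  | zero => simp
  | succ n ih =>
    rw [pow_succ, ← vecMul_vecMul, ih, add_vecMul, ha, smul_vecMul, hb, smul_smul, pow_succ]

theorem tendsto_vecMul_pow_dotProduct {ι : Type*} [Fintype ι] [DecidableEq ι]
    {M : Matrix ι ι ℝ} {u a : ι → ℝ} {α : ℝ} (ha : a ᵥ* M = a)
    (hb : (u - a) ᵥ* M = α • (u - a)) (hα : |α| < 1) {k : ℕ → ℕ} (hk : Tendsto k atTop atTop)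
    {w : ℕ → ι → ℝ} {v : ι → ℝ} (hw : Tendsto w atTop (𝓝 v)) :
    Tendsto (fun N => u ᵥ* M ^ k N ⬝ᵥ w N) atTop (𝓝 (a ⬝ᵥ v)) := by
  have hpow : Tendsto (fun N => α ^ k N) atTop (𝓝 0) :=
    (tendsto_pow_atTop_nhds_zero_of_abs_lt_one hα).comp hk
  have hdot (b : ι → ℝ) : Tendsto (fun N => b ⬝ᵥ w N) atTop (𝓝 (b ⬝ᵥ v)) :=
    ((continuous_const.dotProduct continuous_id).tendsto v).comp hw
  have := (hdot a).add (hpow.mul (hdot (u - a)))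
  simp only [zero_mul, add_zero] at this
  refine this.congr fun N => ?_
  simp [vecMul_pow_eq_add_pow_smul ha hb, add_dotProduct, smul_dotProduct]

theorem stmt12_general (p1 p2 q : ℝ) (hp2 : 0 < p2)
    (hq' : q < 1) (hsum : p1 + p2 + q = 1) (hsym : p1 + 2 * p2 - q = 0)
    (M : Matrix (Fin 2) (Fin 2) ℝ)
    (hM : M = !![p1 / q, p2 / q; 1 + p1 / q, p2 / q])
    (σ2 : ℝ) (hσ : σ2 = 6 * q - 2)
    (lam : ℝ) (x : ℝ) (hx : x ∈ Set.Ioc (0:ℝ) 1) :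
    Tendsto (fun N : ℕ =>
        (N : ℝ) * (Matrix.vecMul ![p1 / q, p2 / q] (M ^ (⌊(N : ℝ) * x⌋₊ - 1)) ⬝ᵥ
          ![1 - Real.exp (-(2 * lam) / N), 1 - Real.exp (-lam / N)]))
      atTop (nhds (2 * lam / σ2)) := by
  have hp1_eq : p1 = 2 - 3 * q := by linarith
  have hp2_eq : p2 = 2 * q - 1 := by linarith
  have hq0 : q ≠ 0 := by linarith
  have hq3 : 3 * q - 1 ≠ 0 := by linarith
  set a : Fin 2 → ℝ := ![(1 - q) / (3 * q - 1), (2 * q - 1) / (3 * q - 1)]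
  have ha : a ᵥ* M = a := by
    ext j
    fin_cases j <;> simp only [a, hM, hp1_eq, hp2_eq, vecMul, dotProduct, Fin.sum_univ_two, of_apply,
      cons_val', cons_val_zero, cons_val_one, cons_val_fin_one, Fin.zero_eta, Fin.mk_one, Fin.isValue]
    all_goals field_simp; ring
  have hb : (![p1 / q, p2 / q] - a) ᵥ* M = (-(p2 / q)) • (![p1 / q, p2 / q] - a) := by
    ext j
    fin_cases j <;> simp only [a, hM, hp1_eq, hp2_eq, vecMul, dotProduct, Fin.sum_univ_two, Pi.sub_apply,
      Pi.smul_apply, smul_eq_mul, of_apply, cons_val', cons_val_zero, cons_val_one, cons_val_fin_one,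
      Fin.zero_eta, Fin.mk_one, Fin.isValue]
    all_goals field_simp; ring
  have hα : |-(p2 / q)| < 1 := by
    rw [abs_neg, abs_lt, lt_div_iff₀ (by linarith), div_lt_one (by linarith)]
    constructor <;> linarith
  have hk : Tendsto (fun N : ℕ => ⌊(N : ℝ) * x⌋₊ - 1) atTop atTop :=
    (tendsto_sub_atTop_nat 1).comp <| tendsto_nat_floor_atTop.comp <|
      tendsto_natCast_atTop_atTop.atTop_mul_const hx.1
  have hw : Tendsto (fun N : ℕ => (N : ℝ) • ![1 - exp (-(2 * lam) / N), 1 - exp (-lam / N)])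
      atTop (𝓝 ![2 * lam, lam]) := by
    refine tendsto_pi_nhds.mpr (Fin.forall_fin_two.mpr ⟨?_, ?_⟩) <;>
      simpa using tendsto_natCast_mul_one_sub_exp_neg_div _
  have hlim : a ⬝ᵥ ![2 * lam, lam] = 2 * lam / σ2 := by
    rw [vec2_dotProduct', hσ, show 6 * q - 2 = 2 * (3 * q - 1) by ring]
    field_simp
    ring
  rw [← hlim]
  refine (tendsto_vecMul_pow_dotProduct ha hb hα hk hw).congr fun N => ?_
  rw [dotProduct_smul, smul_eq_mul]

theorem stmt12 (p1 p2 q : ℝ) (hp1 : 0 < p1) (hp1' : p1 < 1) (hp2 : 0 < p2) (hp2' : p2 < 1)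
    (hq : 0 < q) (hq' : q < 1) (hsum : p1 + p2 + q = 1) (hsym : p1 + 2 * p2 - q = 0)
    (hq3 : q ≠ 1 / 3)
    (M : Matrix (Fin 2) (Fin 2) ℝ)
    (hM : M = !![p1 / q, p2 / q; 1 + p1 / q, p2 / q])
    (σ2 : ℝ) (hσ : σ2 = 6 * q - 2)
    (lam : ℝ) (hlam : 0 < lam) (x : ℝ) (hx : x ∈ Set.Ioc (0:ℝ) 1) :
    Tendsto (fun N : ℕ =>
        (N : ℝ) * (Matrix.vecMul ![p1 / q, p2 / q] (M ^ (⌊(N : ℝ) * x⌋₊ - 1)) ⬝ᵥ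
          ![1 - Real.exp (-(2 * lam) / N), 1 - Real.exp (-lam / N)]))
      atTop (nhds (2 * lam / σ2)) :=
  stmt12_general p1 p2 q hp2 hq' hsum hsym M hM σ2 hσ lam x hx
end
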